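/- arXiv:2509.06744 — 5 statements merged into one kernel-verified Lean document; each statement's English description precedes it below -/
import Mathlib

section
/- Let B be s.p.d. with block structure 𝔅 = {m_i}, and let D = diag_𝔅(B) be its block-diagonal part. Then for every full-rank block-diagonal matrix J, the Kaporin number factorizes as β(J B Jᵀ) = β(J D Jᵀ) · β(D^{-1/2} B D^{-1/2}). -/
/-! Since `Jᵀ J` and `D⁻¹` are block diagonal, under the trace they only see the diagonal
blocks of `B`: `tr (J B Jᵀ) = tr (J D Jᵀ)` and `tr (D^{-1/2} B D^{-1/2}) = tr (D⁻¹ D) = N`.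
As `det (J B Jᵀ) = det (J D Jᵀ) · det (D^{-1/2} B D^{-1/2})`, the `N`-th roots in the
denominators of `β` split accordingly. -/

open Matrix

/-- Scalar index type for a block structure with `n` blocks of sizes `m i`. -/
abbrev BIdx {n : ℕ} (m : Fin n → ℕ) := (i : Fin n) × Fin (m i)

/-- The block-diagonal part `diag_𝔅(A)` of a block-structured matrix. -/
def bdiag {n : ℕ} {m : Fin n → ℕ} (A : Matrix (BIdx m) (BIdx m) ℝ) :
    Matrix (BIdx m) (BIdx m) ℝ :=
  fun p q => if p.1 = q.1 then A p q else 0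

/-- A matrix is block-diagonal with respect to the block structure. -/
def IsBlockDiag {n : ℕ} {m : Fin n → ℕ} (J : Matrix (BIdx m) (BIdx m) ℝ) : Prop :=
  ∀ p q : BIdx m, p.1 ≠ q.1 → J p q = 0

/-- The Kaporin number of a matrix. -/
noncomputable def kaporin {N : Type*} [Fintype N] [DecidableEq N] (B : Matrix N N ℝ) : ℝ :=
  B.trace / (Fintype.card N * B.det ^ ((Fintype.card N : ℝ)⁻¹))

lemma Matrix.IsHermitian.cfc_eq_eigenvectorUnitary_mul {ι : Type*} [Fintype ι] [DecidableEq ι]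
    {A : Matrix ι ι ℝ} (hA : A.IsHermitian) (f : ℝ → ℝ) :
    cfc f A = hA.eigenvectorUnitary.1 * diagonal (f ∘ hA.eigenvalues) *
      (star hA.eigenvectorUnitary : Matrix ι ι ℝ) := by
  rw [hA.cfc_eq]
  rfl

open scoped MatrixOrder in
lemma Matrix.PosSemidef.cfc_sqrt_mul_self {ι : Type*} [Fintype ι] [DecidableEq ι]
    {A : Matrix ι ι ℝ} (hA : A.PosSemidef) : cfc Real.sqrt A * cfc Real.sqrt A = A := by
  have hA₀ : 0 ≤ A := hA.nonneg
  rw [← cfc_mul Real.sqrt Real.sqrt A]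
  conv_rhs => rw [← cfc_id' ℝ A]
  exact cfc_congr fun x hx => Real.mul_self_sqrt (spectrum_nonneg_of_nonneg hA₀ hx)

theorem kaporin_eq_mul_of_trace_eq_of_det_eq {ι : Type*} [Fintype ι] [DecidableEq ι]
    {X Y Z : Matrix ι ι ℝ} (htr : X.trace = Y.trace) (hZtr : Z.trace = Fintype.card ι)
    (hdet : X.det = Y.det * Z.det) (hY : 0 ≤ Y.det) (hZ : 0 ≤ Z.det) :
    kaporin X = kaporin Y * kaporin Z := by
  unfold kaporin
  rw [htr, hZtr, hdet, Real.mul_rpow hY hZ]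
  rcases eq_or_ne (Fintype.card ι : ℝ) 0 with hN | hN
  · simp [hN]
  · rw [div_mul_cancel_left₀ hN, ← mul_assoc, div_mul_eq_div_div, div_eq_mul_inv]

section BlockDiag

variable {n : ℕ} {m : Fin n → ℕ} {M N : Matrix (BIdx m) (BIdx m) ℝ}

lemma isBlockDiag_iff_blockTriangular :
    IsBlockDiag M ↔
      M.BlockTriangular Sigma.fst ∧ M.BlockTriangular (OrderDual.toDual ∘ Sigma.fst) :=
  ⟨fun h => ⟨fun _ _ hlt => h _ _ hlt.ne',
      fun _ _ hlt => h _ _ (OrderDual.toDual_lt_toDual.mp hlt).ne⟩,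
    fun ⟨hlow, hup⟩ _ _ hne => hne.lt_or_gt.elim (fun hlt => hup hlt) (fun hlt => hlow hlt)⟩

lemma isBlockDiag_bdiag (A : Matrix (BIdx m) (BIdx m) ℝ) : IsBlockDiag (bdiag A) :=
  fun _ _ hne => if_neg hne

lemma IsBlockDiag.transpose (h : IsBlockDiag M) : IsBlockDiag Mᵀ :=
  fun p q hne => h q p hne.symm

lemma IsBlockDiag.mul (hM : IsBlockDiag M) (hN : IsBlockDiag N) : IsBlockDiag (M * N) := by
  rw [isBlockDiag_iff_blockTriangular] at *
  exact ⟨hM.1.mul hN.1, hM.2.mul hN.2⟩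

lemma IsBlockDiag.inv (h : IsBlockDiag M) : IsBlockDiag M⁻¹ := by
  by_cases hM : IsUnit M.det
  · have := M.invertibleOfIsUnitDet hM
    rw [isBlockDiag_iff_blockTriangular] at *
    exact ⟨blockTriangular_inv_of_blockTriangular h.1,
      blockTriangular_inv_of_blockTriangular h.2⟩
  · rw [nonsing_inv_apply_not_isUnit _ hM]
    exact fun _ _ _ => rfl

lemma IsBlockDiag.trace_mul_bdiag (hM : IsBlockDiag M) (A : Matrix (BIdx m) (BIdx m) ℝ) :
    (M * A).trace = (M * bdiag A).trace := by
  simp only [Matrix.trace, Matrix.diag, Matrix.mul_apply]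
  refine Finset.sum_congr rfl fun p _ => Finset.sum_congr rfl fun q _ => ?_
  by_cases h : p.1 = q.1
  · simp [bdiag, h.symm]
  · rw [hM p q h, zero_mul, zero_mul]

lemma IsBlockDiag.trace_conj_bdiag (hM : IsBlockDiag M) (A : Matrix (BIdx m) (BIdx m) ℝ) :
    (M * A * Mᵀ).trace = (M * bdiag A * Mᵀ).trace := by
  rw [trace_mul_comm, trace_mul_comm (M * bdiag A), ← Matrix.mul_assoc, ← Matrix.mul_assoc]
  exact (hM.transpose.mul hM).trace_mul_bdiag A

lemma trace_inv_bdiag_mul {A : Matrix (BIdx m) (BIdx m) ℝ} (hA : (bdiag A).det ≠ 0) :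
    ((bdiag A)⁻¹ * A).trace = Fintype.card (BIdx m) := by
  rw [(isBlockDiag_bdiag A).inv.trace_mul_bdiag, nonsing_inv_mul _ hA.isUnit, trace_one]

end BlockDiag

theorem kaporin_conj_bdiag_factorization {n : ℕ} {m : Fin n → ℕ}
    {B J S : Matrix (BIdx m) (BIdx m) ℝ} (hB : 0 ≤ B.det) (hD : (bdiag B).det ≠ 0)
    (hS : S * S = bdiag B) (hJ : IsBlockDiag J) :
    kaporin (J * B * Jᵀ) = kaporin (J * bdiag B * Jᵀ) * kaporin (S⁻¹ * B * S⁻¹) := by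
  have hSinv : S⁻¹ * S⁻¹ = (bdiag B)⁻¹ := by rw [← hS, Matrix.mul_inv_rev]
  have hdetS : S.det * S.det = (bdiag B).det := by rw [← det_mul, hS]
  have hS₀ : S.det ≠ 0 := left_ne_zero_of_mul (hdetS ▸ hD)
  have hdet_conj : (S⁻¹ * B * S⁻¹).det = S.det⁻¹ ^ 2 * B.det := by
    rw [det_mul, det_mul, det_nonsing_inv, Ring.inverse_eq_inv]
    ring
  refine kaporin_eq_mul_of_trace_eq_of_det_eq (hJ.trace_conj_bdiag B) ?_ ?_ ?_ ?_
  · rw [trace_mul_cycle, hSinv, trace_inv_bdiag_mul hD]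
  · rw [hdet_conj, det_mul, det_mul, det_mul, det_mul, det_transpose, ← hdetS]
    field_simp
  · rw [det_mul, det_mul, det_transpose, ← hdetS]
    nlinarith [sq_nonneg (J.det * S.det)]
  · rw [hdet_conj]
    positivity

theorem kaporin_blockDiag_factorization_general {n : ℕ} {m : Fin n → ℕ}
    (B : Matrix (BIdx m) (BIdx m) ℝ) (hB : B.PosDef)
    (hD : (bdiag B).PosDef)
    (J : Matrix (BIdx m) (BIdx m) ℝ) (hJd : IsBlockDiag J) :
    kaporin (J * B * Jᵀ) =
      kaporin (J * bdiag B * Jᵀ) *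
        kaporin ((hD.posSemidef.1.eigenvectorUnitary.1 * diagonal (Real.sqrt ∘ hD.posSemidef.1.eigenvalues) *
            (star hD.posSemidef.1.eigenvectorUnitary : Matrix (BIdx m) (BIdx m) ℝ))⁻¹ * B *
          (hD.posSemidef.1.eigenvectorUnitary.1 * diagonal (Real.sqrt ∘ hD.posSemidef.1.eigenvalues) *
            (star hD.posSemidef.1.eigenvectorUnitary : Matrix (BIdx m) (BIdx m) ℝ))⁻¹) := by
  rw [← hD.posSemidef.1.cfc_eq_eigenvectorUnitary_mul]
  exact kaporin_conj_bdiag_factorization hB.det_pos.le hD.det_pos.ne'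
    hD.posSemidef.cfc_sqrt_mul_self hJd

/-- For `B` s.p.d. with block structure, `D = diag_𝔅(B)` its block-diagonal part, and
any full-rank block-diagonal `J`, the Kaporin number factorizes as
`β(J B Jᵀ) = β(J D Jᵀ) · β(D^{-1/2} B D^{-1/2})`. -/
theorem kaporin_blockDiag_factorization {n : ℕ} {m : Fin n → ℕ}
    (B : Matrix (BIdx m) (BIdx m) ℝ) (hB : B.PosDef)
    (hD : (bdiag B).PosDef)
    (J : Matrix (BIdx m) (BIdx m) ℝ) (hJ : IsUnit J) (hJd : IsBlockDiag J) :
    kaporin (J * B * Jᵀ) =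
      kaporin (J * bdiag B * Jᵀ) *
        kaporin ((hD.posSemidef.1.eigenvectorUnitary.1 * diagonal (Real.sqrt ∘ hD.posSemidef.1.eigenvalues) *
            (star hD.posSemidef.1.eigenvectorUnitary : Matrix (BIdx m) (BIdx m) ℝ))⁻¹ * B *
          (hD.posSemidef.1.eigenvectorUnitary.1 * diagonal (Real.sqrt ∘ hD.posSemidef.1.eigenvalues) *
            (star hD.posSemidef.1.eigenvectorUnitary : Matrix (BIdx m) (BIdx m) ℝ))⁻¹) :=
  kaporin_blockDiag_factorization_general B hB hD J hJd
end

section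
/- Let A be s.p.d. with block structure 𝔅 and let F be the block-FSAI matrix based on a lower-triangular block sparsity pattern 𝒫 (containing the diagonal), i.e., F has identity diagonal blocks and F[{i}, 𝒫̃_i] = −A[{i}, 𝒫̃_i] A[𝒫̃_i, 𝒫̃_i]⁻¹ for each block row i, where 𝒫̃_i = 𝒫_i \ {i}. Let S be the block-diagonal matrix with S_{ii} = A_{ii} − A[{i}, 𝒫̃_i] A[𝒫̃_i, 𝒫̃_i]⁻¹ A[𝒫̃_i, {i}]. Then diag_𝔅(F A) = S = diag_𝔅(F A Fᵀ). -/
/-! Block row `i` of `F` is `I` on block `i`, `F[{i}, 𝒫̃ᵢ]` on `𝒫̃ᵢ` and zero elsewhere, so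
`(F B)[{i}, ·] = B[{i}, ·] + F[{i}, 𝒫̃ᵢ] B[𝒫̃ᵢ, ·]` for every `B`. With `B = A` the choice of
`F[{i}, 𝒫̃ᵢ]` makes `(F A)[{i}, 𝒫̃ᵢ] = 0` and `(F A)ᵢᵢ = Sᵢᵢ`. Since `F A Fᵀ = (F (F A)ᵀ)ᵀ`, the
same expansion with `B = (F A)ᵀ` gives `(F A Fᵀ)ᵢᵢ = (F A)ᵢᵢ + (F A)[{i}, 𝒫̃ᵢ] F[{i}, 𝒫̃ᵢ]ᵀ`,
whose second term vanishes. -/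

open Matrix

/-- The `(i,j)` block of a block-structured matrix. -/
def blk {n : ℕ} {m : Fin n → ℕ} (A : Matrix (BIdx m) (BIdx m) ℝ) (i j : Fin n) :
    Matrix (Fin (m i)) (Fin (m j)) ℝ :=
  fun a b => A ⟨i, a⟩ ⟨j, b⟩

/-- The block submatrix `A[S, T]` with block-row indices in `S` and block-column indices in `T`. -/
def subM {n : ℕ} {m : Fin n → ℕ} (A : Matrix (BIdx m) (BIdx m) ℝ) (S T : Finset (Fin n)) :
    Matrix {p : BIdx m // p.1 ∈ S} {q : BIdx m // q.1 ∈ T} ℝ :=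
  fun p q => A p.val q.val

/-- The block row submatrix `A[{i}, T]`. -/
def rowM {n : ℕ} {m : Fin n → ℕ} (A : Matrix (BIdx m) (BIdx m) ℝ) (i : Fin n)
    (T : Finset (Fin n)) : Matrix (Fin (m i)) {q : BIdx m // q.1 ∈ T} ℝ :=
  fun a q => A ⟨i, a⟩ q.val

/-- The block column submatrix `A[S, {i}]`. -/
def colM {n : ℕ} {m : Fin n → ℕ} (A : Matrix (BIdx m) (BIdx m) ℝ) (S : Finset (Fin n))
    (i : Fin n) : Matrix {p : BIdx m // p.1 ∈ S} (Fin (m i)) ℝ :=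
  fun p a => A p.val ⟨i, a⟩

/-- A block sparsity pattern, given by its rows `P i ⊆ {1,…,n}`, is lower triangular and
contains the diagonal. -/
def IsLowerPattern {n : ℕ} (P : Fin n → Finset (Fin n)) : Prop :=
  (∀ i, i ∈ P i) ∧ ∀ i j, j ∈ P i → j ≤ i

/-- `F` is the block-FSAI matrix for `A` based on the pattern `P`: identity diagonal blocks,
zero blocks outside the pattern, and `F[{i}, 𝒫̃ᵢ] = -A[{i}, 𝒫̃ᵢ] A[𝒫̃ᵢ, 𝒫̃ᵢ]⁻¹`
where `𝒫̃ᵢ = Pᵢ \ {i}`. -/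
def IsFSAI {n : ℕ} {m : Fin n → ℕ} (A F : Matrix (BIdx m) (BIdx m) ℝ)
    (P : Fin n → Finset (Fin n)) : Prop :=
  (∀ i, blk F i i = 1) ∧
  (∀ p q : BIdx m, p.1 ≠ q.1 → q.1 ∉ P p.1 → F p q = 0) ∧
  (∀ i, rowM F i ((P i).erase i) =
    -(rowM A i ((P i).erase i)) * (subM A ((P i).erase i) ((P i).erase i))⁻¹)

/-- `S` is the block-diagonal FSAI Schur-complement matrix:
`S_{ii} = A_{ii} - A[{i}, 𝒫̃ᵢ] A[𝒫̃ᵢ, 𝒫̃ᵢ]⁻¹ A[𝒫̃ᵢ, {i}]`. -/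
def IsFSAISchur {n : ℕ} {m : Fin n → ℕ} (A S : Matrix (BIdx m) (BIdx m) ℝ)
    (P : Fin n → Finset (Fin n)) : Prop :=
  (∀ p q : BIdx m, p.1 ≠ q.1 → S p q = 0) ∧
  (∀ i, blk S i i =
    blk A i i - rowM A i ((P i).erase i) * (subM A ((P i).erase i) ((P i).erase i))⁻¹ *
      colM A ((P i).erase i) i)

lemma Finset.sum_subtype_fst_mem {ι M : Type*} {α : ι → Type*} [Fintype ι] [DecidableEq ι]
    [∀ i, Fintype (α i)] [AddCommMonoid M] (E : Finset ι) (f : Sigma α → M) :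
    ∑ x : {r : Sigma α // r.1 ∈ E}, f x = ∑ j ∈ E, ∑ b : α j, f ⟨j, b⟩ := by
  rw [← Finset.sum_sigma, ← Finset.sum_subtype (E.sigma fun _ => Finset.univ) (by simp) f]

section BlockRow

variable {n : ℕ} {m : Fin n → ℕ}

lemma mul_apply_of_blk_eq_one {κ : Type*} {F : Matrix (BIdx m) (BIdx m) ℝ}
    (B : Matrix (BIdx m) κ ℝ) {i : Fin n} {T : Finset (Fin n)} (hiT : i ∉ T)
    (hFii : blk F i i = 1) (hFzero : ∀ j, j ≠ i → j ∉ T → blk F i j = 0)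
    (a : Fin (m i)) (q : κ) :
    (F * B) ⟨i, a⟩ q
      = B ⟨i, a⟩ q + ∑ x : {r : BIdx m // r.1 ∈ T}, rowM F i T a x * B x q := by
  have hdiag : ∑ b, F ⟨i, a⟩ ⟨i, b⟩ * B ⟨i, b⟩ q = B ⟨i, a⟩ q := by
    have hFi : ∀ b, F ⟨i, a⟩ ⟨i, b⟩ = (1 : Matrix (Fin (m i)) (Fin (m i)) ℝ) a b :=
      fun b => congrFun₂ hFii a b
    simp [hFi, one_apply]
  have hoff : ∑ j ∈ Finset.univ.erase i, ∑ b, F ⟨i, a⟩ ⟨j, b⟩ * B ⟨j, b⟩ q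
      = ∑ j ∈ T, ∑ b, F ⟨i, a⟩ ⟨j, b⟩ * B ⟨j, b⟩ q := by
    refine (Finset.sum_subset (fun j hj => Finset.mem_erase.2 ⟨?_, Finset.mem_univ j⟩)
      fun j hj hjT => Finset.sum_eq_zero fun b _ => ?_).symm
    · rintro rfl; exact hiT hj
    · have hFij : F ⟨i, a⟩ ⟨j, b⟩ = 0 :=
        congrFun₂ (hFzero j (Finset.ne_of_mem_erase hj) hjT) a b
      rw [hFij, zero_mul]
  rw [Matrix.mul_apply, Fintype.sum_sigma, ← Finset.add_sum_erase _ _ (Finset.mem_univ i),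
    hdiag, hoff]
  exact congrArg _ (Finset.sum_subtype_fst_mem T fun r => F ⟨i, a⟩ r * B r q).symm

end BlockRow

namespace IsFSAI

variable {n : ℕ} {m : Fin n → ℕ} {A F : Matrix (BIdx m) (BIdx m) ℝ}
  {P : Fin n → Finset (Fin n)}

lemma mul_apply (hF : IsFSAI A F P) (B : Matrix (BIdx m) (BIdx m) ℝ) (i : Fin n)
    (a : Fin (m i)) (q : BIdx m) :
    (F * B) ⟨i, a⟩ q
      = B ⟨i, a⟩ q +
        ∑ x : {r : BIdx m // r.1 ∈ (P i).erase i}, rowM F i ((P i).erase i) a x * B x q :=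
  mul_apply_of_blk_eq_one B (Finset.notMem_erase i (P i)) (hF.1 i)
    (fun j hji hjT => funext₂ fun a b => hF.2.1 ⟨i, a⟩ ⟨j, b⟩ (Ne.symm hji)
      fun hjP => hjT (Finset.mem_erase.2 ⟨hji, hjP⟩)) a q

lemma rowM_mul_eq_zero (hA : A.PosDef) (hF : IsFSAI A F P) (i : Fin n) :
    rowM (F * A) i ((P i).erase i) = 0 := by
  have hunit : IsUnit (subM A ((P i).erase i) ((P i).erase i)).det :=
    (isUnit_iff_isUnit_det _).1 (hA.submatrix Subtype.val_injective).isUnit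
  have hrow : rowM F i ((P i).erase i) * subM A ((P i).erase i) ((P i).erase i)
      = -rowM A i ((P i).erase i) := by
    rw [hF.2.2 i, nonsing_inv_mul_cancel_right _ _ hunit]
  ext a x
  calc rowM (F * A) i _ a x
      = A ⟨i, a⟩ x + (rowM F i ((P i).erase i) * subM A ((P i).erase i) ((P i).erase i)) a x :=
        hF.mul_apply A i a x
    _ = 0 := by rw [hrow]; simp [rowM]

lemma blk_mul_self (hF : IsFSAI A F P) (i : Fin n) :
    blk (F * A) i i = blk A i i - rowM A i ((P i).erase i) *
      (subM A ((P i).erase i) ((P i).erase i))⁻¹ * colM A ((P i).erase i) i := by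
  ext a b
  calc blk (F * A) i i a b
      = A ⟨i, a⟩ ⟨i, b⟩ + (rowM F i ((P i).erase i) * colM A ((P i).erase i) i) a b :=
        hF.mul_apply A i a ⟨i, b⟩
    _ = _ := by rw [hF.2.2 i]; simp [blk, sub_eq_add_neg, Matrix.neg_mul]

lemma blk_mul_mul_transpose (hA : A.PosDef) (hF : IsFSAI A F P) (i : Fin n) :
    blk (F * A * Fᵀ) i i = blk (F * A) i i := by
  have hsymm : F * A * Fᵀ = (F * (F * A)ᵀ)ᵀ := by rw [transpose_mul, transpose_transpose]
  ext a b
  calc blk (F * A * Fᵀ) i i a b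
      = (F * A) ⟨i, a⟩ ⟨i, b⟩ +
          ∑ x, rowM F i ((P i).erase i) b x * rowM (F * A) i ((P i).erase i) a x := by
        rw [blk, hsymm, transpose_apply, hF.mul_apply]; rfl
    _ = blk (F * A) i i a b := by simp [hF.rowM_mul_eq_zero hA i, blk]

end IsFSAI

lemma bdiag_eq_of_blk_eq {n : ℕ} {m : Fin n → ℕ} {M S : Matrix (BIdx m) (BIdx m) ℝ}
    (hS : ∀ p q : BIdx m, p.1 ≠ q.1 → S p q = 0) (h : ∀ i, blk M i i = blk S i i) :
    bdiag M = S := by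
  ext ⟨i, a⟩ ⟨j, b⟩
  by_cases hij : i = j
  · subst hij
    simpa [bdiag, blk] using congrFun₂ (h i) a b
  · simp [bdiag, hij, hS ⟨i, a⟩ ⟨j, b⟩ hij]

theorem fsai_bdiag_eq_general {n : ℕ} {m : Fin n → ℕ}
    (A F S : Matrix (BIdx m) (BIdx m) ℝ) (P : Fin n → Finset (Fin n))
    (hA : A.PosDef) (hF : IsFSAI A F P) (hS : IsFSAISchur A S P) :
    bdiag (F * A) = S ∧ S = bdiag (F * A * Fᵀ) := by
  have hFA : ∀ i, blk (F * A) i i = blk S i i := fun i =>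
    (hF.blk_mul_self i).trans (hS.2 i).symm
  exact ⟨bdiag_eq_of_blk_eq hS.1 hFA, (bdiag_eq_of_blk_eq hS.1 fun i =>
    (hF.blk_mul_mul_transpose hA i).trans (hFA i)).symm⟩

/-- For the block-FSAI matrices `F` and `S` of an s.p.d. matrix `A` based on a lower
triangular pattern `P`, one has `diag_𝔅(F A) = S = diag_𝔅(F A Fᵀ)`. -/
theorem fsai_bdiag_eq {n : ℕ} {m : Fin n → ℕ}
    (A F S : Matrix (BIdx m) (BIdx m) ℝ) (P : Fin n → Finset (Fin n))
    (hA : A.PosDef) (hP : IsLowerPattern P) (hF : IsFSAI A F P) (hS : IsFSAISchur A S P) :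
    bdiag (F * A) = S ∧ S = bdiag (F * A * Fᵀ) :=
  fsai_bdiag_eq_general A F S P hA hF hS
end

section
/- With A, 𝒫, F, S as in the block-FSAI construction and G := S^{-1/2} F, the block-diagonal part of the preconditioned matrix G A Gᵀ is the identity matrix. -/
open Matrix

open scoped ComplexOrder in
/-- The square root of a positive semidefinite matrix, as defined in Mathlib (December 2024). -/
noncomputable def Matrix.PosSemidef.sqrt {n 𝕜 : Type*} [Fintype n] [DecidableEq n] [RCLike 𝕜]
    {M : Matrix n n 𝕜} (hA : M.PosSemidef) : Matrix n n 𝕜 :=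
  hA.1.eigenvectorUnitary.1 * diagonal ((↑) ∘ (√·) ∘ hA.1.eigenvalues) *
    (star hA.1.eigenvectorUnitary : Matrix n n 𝕜)

/-!
`S` is block diagonal, so it commutes with the projections `E_k` onto the blocks; hence so do its
square root (a continuous function of `S`) and the inverse `S^{-1/2}` of that. Since
`bdiag X = ∑ₖ E_k X E_k`, the factors `S^{-1/2}` can be pulled out of `bdiag`:
`bdiag (G A Gᵀ) = S^{-1/2} bdiag (F A Fᵀ) S^{-1/2}`. Row block `i` of `F` is `[I  W]` on the
blocks `{i} ∪ 𝒫̃ᵢ` with `W = -A[{i},𝒫̃ᵢ] A[𝒫̃ᵢ,𝒫̃ᵢ]⁻¹`, so the `i`-th diagonal block of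
`F A Fᵀ` is the Schur complement `Sᵢᵢ`. Thus `bdiag (F A Fᵀ) = S`, and
`bdiag (G A Gᵀ) = S^{-1/2} S S^{-1/2} = 1`.
-/

section Selection

variable {α l l' o p : Type*} [Fintype o] [DecidableEq o] [CommRing α]

lemma Matrix.one_submatrix_id_mul (e : l → o) (M : Matrix o p α) :
    (1 : Matrix o o α).submatrix e id * M = M.submatrix e id := by
  simpa using one_submatrix_mul e (Equiv.refl o) M

lemma Matrix.one_submatrix_id_mul_mul_transpose (e : l → o) (e' : l' → o) (M : Matrix o o α) :
    (1 : Matrix o o α).submatrix e id * M * ((1 : Matrix o o α).submatrix e' id)ᵀ =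
      M.submatrix e e' := by
  rw [one_submatrix_id_mul, transpose_submatrix, transpose_one]
  simpa using mul_submatrix_one (Equiv.refl o) e' (M.submatrix e id)

-- Without `(p := P)` the index type of the second factor is unknown when `*` is elaborated, and
-- the product is elaborated at `CStarMatrix`.
lemma Matrix.mul_one_submatrix_val {P : o → Prop} [DecidablePred P]
    (w : Matrix l {x // P x} α) :
    w * (1 : Matrix o o α).submatrix (Subtype.val (p := P)) id =
      of fun a q => if h : P q then w a ⟨q, h⟩ else 0 := by
  ext a q
  simp only [of_apply, mul_apply, submatrix_apply, id, one_apply, mul_ite, mul_one, mul_zero]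
  split_ifs with h
  · rw [Fintype.sum_eq_single ⟨q, h⟩ fun s hs => if_neg fun hsq => hs (Subtype.ext hsq)]
    simp
  · exact Finset.sum_eq_zero fun s _ => if_neg fun hsq : s.val = q => h (hsq ▸ s.2)

end Selection

lemma Commute.nonsing_inv_left {ι R : Type*} [Fintype ι] [DecidableEq ι] [CommRing R]
    {T E : Matrix ι ι R} (h : Commute T E) : Commute T⁻¹ E := by
  by_cases hT : IsUnit T.det
  · calc T⁻¹ * E = T⁻¹ * (E * T * T⁻¹) := by
          rw [Matrix.mul_assoc, mul_nonsing_inv _ hT, Matrix.mul_one]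
      _ = E * T⁻¹ := by
          rw [← h.eq, Matrix.mul_assoc, nonsing_inv_mul_cancel_left _ _ hT]
  · rw [nonsing_inv_apply_not_isUnit _ hT]
    exact Commute.zero_left E

lemma Matrix.add_quadratic_neg_mul_inv {R ι κ : Type*} [Fintype κ] [DecidableEq κ] [CommRing R]
    (a : Matrix ι ι R) (r : Matrix ι κ R) {M : Matrix κ κ R} (hM : IsUnit M.det)
    (hMt : Mᵀ = M) :
    a + r * (-r * M⁻¹)ᵀ + -r * M⁻¹ * rᵀ + -r * M⁻¹ * M * (-r * M⁻¹)ᵀ =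
      a - r * M⁻¹ * rᵀ := by
  simp only [transpose_neg, transpose_mul, transpose_nonsing_inv, hMt, Matrix.neg_mul,
    Matrix.mul_neg, neg_neg, Matrix.mul_assoc, mul_nonsing_inv_cancel_left _ _ hM]
  abel

namespace Matrix.PosSemidef

variable {ι : Type*} [Fintype ι] [DecidableEq ι] {M : Matrix ι ι ℝ}

lemma sqrt_eq_cfc (hM : M.PosSemidef) : hM.sqrt = cfc Real.sqrt M := by
  rw [hM.1.cfc_eq]
  rfl

open scoped MatrixOrder in
lemma sqrt_mul_self (hM : M.PosSemidef) : hM.sqrt * hM.sqrt = M := by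
  rw [sqrt_eq_cfc, ← cfcₙ_eq_cfc, ← CFC.sqrt_eq_real_sqrt M hM.nonneg]
  exact CFC.sqrt_mul_sqrt_self M hM.nonneg

lemma transpose_sqrt (hM : M.PosSemidef) : hM.sqrtᵀ = hM.sqrt := by
  rw [← conjTranspose_eq_transpose_of_trivial, sqrt_eq_cfc]
  exact (cfc_predicate Real.sqrt M).star_eq

lemma commute_sqrt (hM : M.PosSemidef) {N : Matrix ι ι ℝ} (h : Commute M N) :
    Commute hM.sqrt N := by
  rw [sqrt_eq_cfc]
  exact h.cfc_real Real.sqrt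

end Matrix.PosSemidef

lemma Matrix.PosDef.isUnit_det_sqrt {ι : Type*} [Fintype ι] [DecidableEq ι]
    {M : Matrix ι ι ℝ} (hM : M.PosDef) : IsUnit hM.posSemidef.sqrt.det := by
  have h : IsUnit (hM.posSemidef.sqrt.det * hM.posSemidef.sqrt.det) := by
    rw [← det_mul, hM.posSemidef.sqrt_mul_self]
    exact hM.det_pos.ne'.isUnit
  exact (IsUnit.mul_iff.mp h).1

section BlockProjection

variable {n : ℕ} {m : Fin n → ℕ}

def blockProj (k : Fin n) : Matrix (BIdx m) (BIdx m) ℝ :=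
  diagonal fun p => if p.1 = k then 1 else 0

lemma bdiag_eq_sum_blockProj (X : Matrix (BIdx m) (BIdx m) ℝ) :
    bdiag X = ∑ k, blockProj k * X * blockProj k := by
  ext p q
  simp [bdiag, blockProj, Matrix.sum_apply, diagonal_mul, mul_diagonal, ite_mul, mul_ite]

lemma bdiag_mul_mul {D D' : Matrix (BIdx m) (BIdx m) ℝ} (hD : ∀ k, Commute D (blockProj k))
    (hD' : ∀ k, Commute D' (blockProj k)) (X : Matrix (BIdx m) (BIdx m) ℝ) :
    bdiag (D * X * D') = D * bdiag X * D' := by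
  simp only [bdiag_eq_sum_blockProj, Finset.mul_sum, Finset.sum_mul]
  refine Finset.sum_congr rfl fun k _ => ?_
  simp only [← Matrix.mul_assoc]
  rw [← (hD k).eq]
  simp only [Matrix.mul_assoc]
  rw [(hD' k).eq]

lemma commute_blockProj_of_offDiag_eq_zero {S : Matrix (BIdx m) (BIdx m) ℝ}
    (hS : ∀ p q : BIdx m, p.1 ≠ q.1 → S p q = 0) (k : Fin n) : Commute S (blockProj k) := by
  ext p q
  by_cases hpq : p.1 = q.1
  · simp [blockProj, diagonal_mul, mul_diagonal, hpq]
  · simp [blockProj, diagonal_mul, mul_diagonal, hS p q hpq]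

end BlockProjection

section FSAI

variable {n : ℕ} {m : Fin n → ℕ} {A F : Matrix (BIdx m) (BIdx m) ℝ} {P : Fin n → Finset (Fin n)}

lemma submatrix_sigmaMk_eq_of_isFSAI (hF : IsFSAI A F P) (i : Fin n) :
    F.submatrix (Sigma.mk i) id =
      (1 : Matrix (BIdx m) (BIdx m) ℝ).submatrix (Sigma.mk i) id +
        rowM F i ((P i).erase i) * (1 : Matrix (BIdx m) (BIdx m) ℝ).submatrix
          (Subtype.val (p := fun q : BIdx m => q.1 ∈ (P i).erase i)) id := by
  rw [mul_one_submatrix_val]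
  ext a ⟨j, c⟩
  simp only [submatrix_apply, Matrix.add_apply, of_apply]
  by_cases hji : j = i
  · subst hji
    have hdiag := congrFun (congrFun (hF.1 j) a) c
    simp only [blk] at hdiag
    simp [hdiag, one_apply]
  · have hne : (⟨i, a⟩ : BIdx m) ≠ ⟨j, c⟩ := fun h => hji (congrArg Sigma.fst h).symm
    rw [id_eq, one_apply_ne hne, zero_add]
    by_cases hjt : j ∈ (P i).erase i
    · rw [dif_pos hjt]
      rfl
    · rw [dif_neg hjt]
      exact hF.2.1 ⟨i, a⟩ ⟨j, c⟩ (Ne.symm hji) fun hj => hjt (Finset.mem_erase.mpr ⟨hji, hj⟩)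

lemma blk_mul_mul_transpose_of_isFSAI (hA : A.PosDef) (hF : IsFSAI A F P) (i : Fin n) :
    blk (F * A * Fᵀ) i i =
      blk A i i - rowM A i ((P i).erase i) * (subM A ((P i).erase i) ((P i).erase i))⁻¹ *
        colM A ((P i).erase i) i := by
  set t := (P i).erase i
  set ι := (1 : Matrix (BIdx m) (BIdx m) ℝ).submatrix (Sigma.mk i) id
  set π : Matrix {q : BIdx m // q.1 ∈ t} (BIdx m) ℝ :=
    (1 : Matrix (BIdx m) (BIdx m) ℝ).submatrix Subtype.val id
  set w := rowM F i t
  have hAt : Aᵀ = A := (conjTranspose_eq_transpose_of_trivial A).symm.trans hA.1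
  have hMt : (subM A t t)ᵀ = subM A t t := congrArg (submatrix · Subtype.val Subtype.val) hAt
  have hcol : colM A t i = (rowM A i t)ᵀ :=
    congrArg (submatrix · Subtype.val (Sigma.mk i)) hAt.symm
  have hM : IsUnit (subM A t t).det :=
    (hA.submatrix Subtype.val_injective).det_pos.ne'.isUnit
  have hrow : ι * F = ι + w * π := by
    rw [one_submatrix_id_mul]
    exact submatrix_sigmaMk_eq_of_isFSAI hF i
  have hw : w = -rowM A i t * (subM A t t)⁻¹ := hF.2.2 i
  calc blk (F * A * Fᵀ) i i = ι * (F * A * Fᵀ) * ιᵀ :=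
        (one_submatrix_id_mul_mul_transpose (Sigma.mk i) (Sigma.mk i) (F * A * Fᵀ)).symm
    _ = (ι + w * π) * A * (ι + w * π)ᵀ := by
        rw [← hrow]
        simp only [transpose_mul, Matrix.mul_assoc]
    _ = ι * A * ιᵀ + ι * A * πᵀ * wᵀ + w * (π * A * ιᵀ) + w * (π * A * πᵀ) * wᵀ := by
        simp only [transpose_add, transpose_mul, Matrix.add_mul, Matrix.mul_add, Matrix.mul_assoc]
        abel
    _ = blk A i i + rowM A i t * wᵀ + w * colM A t i + w * subM A t t * wᵀ := by
        simp only [ι, π, one_submatrix_id_mul_mul_transpose]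
        rfl
    _ = _ := by
        rw [hw, hcol]
        exact add_quadratic_neg_mul_inv _ _ hM hMt

lemma bdiag_mul_mul_transpose_of_isFSAI {S : Matrix (BIdx m) (BIdx m) ℝ} (hA : A.PosDef)
    (hF : IsFSAI A F P) (hS : IsFSAISchur A S P) : bdiag (F * A * Fᵀ) = S := by
  ext ⟨i, a⟩ ⟨j, b⟩
  by_cases hij : i = j
  · subst hij
    have hblk := (blk_mul_mul_transpose_of_isFSAI hA hF i).trans (hS.2 i).symm
    simpa [bdiag, blk] using congrFun (congrFun hblk a) b
  · simp [bdiag, hij, hS.1 ⟨i, a⟩ ⟨j, b⟩ hij]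

end FSAI

theorem fsai_preconditioned_bdiag_eq_one_general {n : ℕ} {m : Fin n → ℕ}
    (A F S : Matrix (BIdx m) (BIdx m) ℝ) (P : Fin n → Finset (Fin n))
    (hA : A.PosDef) (hF : IsFSAI A F P) (hS : IsFSAISchur A S P)
    (hSpd : S.PosDef) :
    bdiag ((hSpd.posSemidef.sqrt)⁻¹ * F * A * ((hSpd.posSemidef.sqrt)⁻¹ * F)ᵀ) = 1 := by
  set T := hSpd.posSemidef.sqrt
  have hT : IsUnit T.det := hSpd.isUnit_det_sqrt
  have hTt : Tᵀ = T := hSpd.posSemidef.transpose_sqrt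
  have hcomm (k : Fin n) : Commute T⁻¹ (blockProj k) :=
    (hSpd.posSemidef.commute_sqrt
      (commute_blockProj_of_offDiag_eq_zero hS.1 k)).nonsing_inv_left
  calc bdiag (T⁻¹ * F * A * (T⁻¹ * F)ᵀ) = bdiag (T⁻¹ * (F * A * Fᵀ) * T⁻¹) := by
        rw [transpose_mul, transpose_nonsing_inv, hTt]
        simp only [Matrix.mul_assoc]
    _ = T⁻¹ * S * T⁻¹ := by
        rw [bdiag_mul_mul hcomm hcomm, bdiag_mul_mul_transpose_of_isFSAI hA hF hS]
    _ = 1 := by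
        rw [← hSpd.posSemidef.sqrt_mul_self, ← Matrix.mul_assoc, nonsing_inv_mul _ hT,
          Matrix.one_mul, mul_nonsing_inv _ hT]

/-- With `G := S^{-1/2} F`, the block-diagonal part of the preconditioned matrix
`G A Gᵀ` is the identity matrix. -/
theorem fsai_preconditioned_bdiag_eq_one {n : ℕ} {m : Fin n → ℕ}
    (A F S : Matrix (BIdx m) (BIdx m) ℝ) (P : Fin n → Finset (Fin n))
    (hA : A.PosDef) (hP : IsLowerPattern P) (hF : IsFSAI A F P) (hS : IsFSAISchur A S P)
    (hSpd : S.PosDef) :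
    bdiag ((hSpd.posSemidef.sqrt)⁻¹ * F * A * ((hSpd.posSemidef.sqrt)⁻¹ * F)ᵀ) = 1 :=
  fsai_preconditioned_bdiag_eq_one_general A F S P hA hF hS hSpd
end

section
/- With F constructed as the block-FSAI matrix for A based on the lower triangular pattern 𝒫, for every block row k and every column index j ∈ 𝒫̃_k it holds that (F A)_{kj} = 0, i.e., the off-diagonal blocks of FA vanish on the pattern: 𝒫(FA) ∩ 𝒫 = {(k,k) : k = 1,...,n}. -/
open Matrix

/-! Row `k` of `F` is the identity on block `k`, `F[{k}, 𝒫̃ₖ]` on `𝒫̃ₖ` and zero elsewhere, so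
`(F A)[{k}, 𝒫̃ₖ] = A[{k}, 𝒫̃ₖ] + F[{k}, 𝒫̃ₖ] A[𝒫̃ₖ, 𝒫̃ₖ]`; by the defining formula for
`F[{k}, 𝒫̃ₖ]` the second term is `-A[{k}, 𝒫̃ₖ]`, as `A[𝒫̃ₖ, 𝒫̃ₖ]` is invertible, being a principal
submatrix of the positive definite `A`. -/

theorem Finset.sum_subtype_fst_mem_eq_sum_sigma {ι : Type*} {α : ι → Type*} {M : Type*}
    [Fintype ι] [DecidableEq ι] [∀ i, Fintype (α i)] [AddCommMonoid M] (T : Finset ι)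
    (g : Sigma α → M) : ∑ p : {p : Sigma α // p.1 ∈ T}, g p = ∑ i ∈ T, ∑ c, g ⟨i, c⟩ := by
  rw [← Finset.sum_sigma T (fun _ => Finset.univ) g,
    Finset.sum_subtype (p := fun p : Sigma α => p.1 ∈ T) _ (by simp) g]

theorem Fintype.sum_sigma_eq_sum_fiber_add_sum_subtype {ι : Type*} {α : ι → Type*} {M : Type*}
    [Fintype ι] [DecidableEq ι] [∀ i, Fintype (α i)] [AddCommMonoid M] {k : ι} {T : Finset ι}
    (hk : k ∉ T) (g : Sigma α → M) (hg : ∀ p, p.1 ∉ insert k T → g p = 0) :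
    ∑ p, g p = ∑ c, g ⟨k, c⟩ + ∑ p : {p : Sigma α // p.1 ∈ T}, g p := by
  rw [Finset.sum_subtype_fst_mem_eq_sum_sigma,
    ← Finset.sum_insert (f := fun i => ∑ c, g ⟨i, c⟩) hk, Fintype.sum_sigma]
  exact (Finset.sum_subset (Finset.subset_univ _) fun i _ hi =>
    Finset.sum_eq_zero fun c _ => hg ⟨i, c⟩ hi).symm

theorem Matrix.PosDef.subM {n : ℕ} {m : Fin n → ℕ} {A : Matrix (BIdx m) (BIdx m) ℝ}
    (hA : A.PosDef) (S : Finset (Fin n)) : (subM A S S).PosDef :=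
  hA.submatrix Subtype.val_injective

namespace IsFSAI

variable {n : ℕ} {m : Fin n → ℕ} {A F : Matrix (BIdx m) (BIdx m) ℝ}
  {P : Fin n → Finset (Fin n)}

theorem apply_same_block (hF : IsFSAI A F P) (k : Fin n) (a c : Fin (m k)) :
    F ⟨k, a⟩ ⟨k, c⟩ = if a = c then 1 else 0 :=
  congrFun (congrFun (hF.1 k) a) c

theorem apply_eq_zero (hF : IsFSAI A F P) {k : Fin n} (a : Fin (m k)) {p : BIdx m}
    (hp : p.1 ∉ insert k ((P k).erase k)) : F ⟨k, a⟩ p = 0 := by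
  simp only [Finset.mem_insert, Finset.mem_erase, not_or, not_and_or, not_not] at hp
  exact hF.2.1 ⟨k, a⟩ p (Ne.symm hp.1) (hp.2.resolve_left hp.1)

theorem mul_apply_eq_add_rowM_mul_subM (hF : IsFSAI A F P) {k j : Fin n}
    (hj : j ∈ (P k).erase k) (a : Fin (m k)) (b : Fin (m j)) :
    (F * A) ⟨k, a⟩ ⟨j, b⟩ = A ⟨k, a⟩ ⟨j, b⟩ +
      (rowM F k ((P k).erase k) * subM A ((P k).erase k) ((P k).erase k)) a ⟨⟨j, b⟩, hj⟩ := by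
  rw [Matrix.mul_apply, Fintype.sum_sigma_eq_sum_fiber_add_sum_subtype (Finset.notMem_erase k _)
    _ fun p hp => by rw [hF.apply_eq_zero a hp, zero_mul]]
  simp [hF.apply_same_block, ite_mul, Matrix.mul_apply, rowM, subM]

theorem rowM_mul_subM (hF : IsFSAI A F P) (hA : A.PosDef) (k : Fin n) :
    rowM F k ((P k).erase k) * subM A ((P k).erase k) ((P k).erase k) =
      -rowM A k ((P k).erase k) := by
  have hdet := (Matrix.isUnit_iff_isUnit_det _).mp (hA.subM ((P k).erase k)).isUnit
  rw [hF.2.2 k, Matrix.mul_assoc, Matrix.nonsing_inv_mul _ hdet, Matrix.mul_one]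

end IsFSAI

theorem fsai_prod_vanishes_on_pattern_general {n : ℕ} {m : Fin n → ℕ}
    (A F : Matrix (BIdx m) (BIdx m) ℝ) (P : Fin n → Finset (Fin n))
    (hA : A.PosDef) (hF : IsFSAI A F P) :
    ∀ k j : Fin n, j ≠ k → j ∈ P k → blk (F * A) k j = 0 := by
  intro k j hjk hjP
  ext a b
  rw [blk, hF.mul_apply_eq_add_rowM_mul_subM (Finset.mem_erase.mpr ⟨hjk, hjP⟩),
    hF.rowM_mul_subM hA]
  simp [rowM]

/-- The off-diagonal blocks of `F A` vanish on the pattern: for every block row `k` and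
every `j ∈ 𝒫̃ₖ`, `(F A)_{kj} = 0`, i.e. `𝒫(FA) ∩ 𝒫 ⊆ {(k,k)}`. -/
theorem fsai_prod_vanishes_on_pattern {n : ℕ} {m : Fin n → ℕ}
    (A F : Matrix (BIdx m) (BIdx m) ℝ) (P : Fin n → Finset (Fin n))
    (hA : A.PosDef) (hP : IsLowerPattern P) (hF : IsFSAI A F P) :
    ∀ k j : Fin n, j ≠ k → j ∈ P k → blk (F * A) k j = 0 :=
  fsai_prod_vanishes_on_pattern_general A F P hA hF
end

section
/- For k ≥ 1 and any δ ∈ [−1, −cos(π/(2k+1))), the minimax problem min over p ∈ 𝒫_k with p(−1) = 1 of max_{t ∈ [δ,1]} (1+t)^{1/2}|p(t)| has the unique minimizer p̂_k(t) = W_k(−t)/(2k+1), where W_k is the Chebyshev polynomial of the fourth kind; in particular this holds for the limit case δ = −1. -/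
open Polynomial Set Real

/-! Substituting `t = -cos θ` turns `√(1 + t) · W_k(-t)` into `√2 · sin ((k + 1/2) θ)`. Hence
`p̂_k` has weighted size `√2 / (2k+1)` on `[-1, 1]` and attains `±√2 / (2k+1)` with alternating
signs at the `k + 1` points `t_j = -cos ((2j+1)π / (2k+1))`, which lie in `(δ, 1]` precisely
because `δ < -cos (π / (2k+1))`. If `p(-1) = 1`, `deg p ≤ k` and the weighted size of `p` is at
most that of `p̂_k`, then `p̂_k - p = (t + 1) u` with `deg u < k`, and `u` alternates weakly in
sign at the `t_j`. Dividing out its zeros there and counting the sign changes that remain shows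
`u = 0`. -/

/-- Chebyshev polynomials of the fourth kind: `W₀ = 1`, `W₁ = 2X + 1`,
`W_{n+2} = 2X W_{n+1} − W_n`. -/
noncomputable def chebyshevW : ℕ → Polynomial ℝ
  | 0 => 1
  | 1 => 2 * Polynomial.X + 1
  | (n + 2) => 2 * Polynomial.X * chebyshevW (n + 1) - chebyshevW n

namespace chebyshevW

@[simp] lemma zero : chebyshevW 0 = 1 := rfl

@[simp] lemma one : chebyshevW 1 = 2 * X + 1 := rfl

lemma add_two (n : ℕ) :
    chebyshevW (n + 2) = 2 * X * chebyshevW (n + 1) - chebyshevW n := rfl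

lemma natDegree_le (k : ℕ) : (chebyshevW k).natDegree ≤ k := by
  induction k using chebyshevW.induct with
  | case1 => simp
  | case2 => simp only [one]; compute_degree
  | case3 n ih₁ ih₂ =>
    rw [add_two]
    refine (natDegree_sub_le _ _).trans (max_le ?_ (by omega))
    have h₂X : (2 * X : ℝ[X]).natDegree ≤ 1 := by compute_degree
    exact (natDegree_mul_le_of_le h₂X ih₁).trans (by omega)

lemma eval_one (k : ℕ) : (chebyshevW k).eval 1 = 2 * k + 1 := by
  induction k using chebyshevW.induct with
  | case1 => simp
  | case2 => norm_num
  | case3 n ih₁ ih₂ =>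
    simp only [add_two, eval_sub, eval_mul, eval_X, eval_ofNat, ih₁, ih₂]
    push_cast
    ring

lemma sin_half_mul_eval_cos (k : ℕ) (θ : ℝ) :
    sin (θ / 2) * (chebyshevW k).eval (cos θ) = sin ((k + 1 / 2) * θ) := by
  induction k using chebyshevW.induct with
  | case1 => simp only [zero, Polynomial.eval_one, mul_one, CharP.cast_eq_zero, zero_add]; ring_nf
  | case2 =>
    have h : sin (3 / 2 * θ) = sin (θ / 2 + θ) := by ring_nf
    simp only [one, eval_add, eval_mul, eval_X, eval_ofNat, Polynomial.eval_one]
    rw [show ((1 : ℕ) : ℝ) + 1 / 2 = 3 / 2 by norm_num, h, sin_add,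
      show θ = 2 * (θ / 2) by ring, sin_two_mul, cos_two_mul, show 2 * (θ / 2) = θ by ring]
    ring
  | case3 n ih₁ ih₂ =>
    have h₂ := sin_add ((n + 1 + 1 / 2) * θ) θ
    have h₀ := sin_sub ((n + 1 + 1 / 2) * θ) θ
    simp only [add_two, eval_sub, eval_mul, eval_X, eval_ofNat]
    push_cast at ih₁ ih₂ ⊢
    rw [show (n + 1 + 1 + 1 / 2) * θ = (n + 1 + 1 / 2) * θ + θ by ring]
    rw [show (n + 1 / 2) * θ = (n + 1 + 1 / 2) * θ - θ by ring] at ih₂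
    linear_combination (2 * cos θ) * ih₁ - ih₂ - h₂ - h₀

lemma sqrt_one_sub_cos_mul_eval_cos (k : ℕ) {θ : ℝ} (h₀ : 0 ≤ θ) (h₂π : θ ≤ 2 * π) :
    √(1 - cos θ) * (chebyshevW k).eval (cos θ) = √2 * sin ((k + 1 / 2) * θ) := by
  have hhalf : √(1 - cos θ) = √2 * sin (θ / 2) := by
    rw [sin_half_eq_sqrt h₀ h₂π, ← sqrt_mul zero_le_two]
    ring_nf
  rw [hhalf, mul_assoc, sin_half_mul_eval_cos]

lemma sqrt_one_add_mul_abs_eval_neg_le (k : ℕ) {t : ℝ} (h₁ : -1 ≤ t) (h₂ : t ≤ 1) :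
    √(1 + t) * |(chebyshevW k).eval (-t)| ≤ √2 := by
  have hcos : cos (arccos (-t)) = -t := cos_arccos (by linarith) (by linarith)
  have h := sqrt_one_sub_cos_mul_eval_cos k (arccos_nonneg (-t))
    ((arccos_le_pi _).trans (by linarith [pi_pos]))
  rw [hcos, sub_neg_eq_add] at h
  calc √(1 + t) * |(chebyshevW k).eval (-t)|
      = |√2 * sin ((k + 1 / 2) * arccos (-t))| := by
        rw [← h, abs_mul, abs_of_nonneg (sqrt_nonneg _)]
    _ ≤ √2 := by
        rw [abs_mul, abs_of_nonneg (sqrt_nonneg _)]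
        exact mul_le_of_le_one_right (sqrt_nonneg _) (abs_sin_le_one _)

noncomputable def node (k j : ℕ) : ℝ := -cos ((2 * j + 1) * π / (2 * k + 1))

lemma sqrt_one_add_node_mul_eval_neg_node {k j : ℕ} (hj : j ≤ k) :
    √(1 + node k j) * (chebyshevW k).eval (-node k j) = (-1) ^ j * √2 := by
  have hk : (0 : ℝ) < 2 * k + 1 := by positivity
  have hjk : (j : ℝ) ≤ k := by exact_mod_cast hj
  have h := sqrt_one_sub_cos_mul_eval_cos k (θ := (2 * j + 1) * π / (2 * k + 1))
    (by positivity) (by rw [div_le_iff₀ hk]; nlinarith [pi_pos])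
  have harg : (k + 1 / 2) * ((2 * j + 1) * π / (2 * k + 1)) = π / 2 + j * π := by
    field_simp; ring
  rw [harg, sin_add_nat_mul_pi, sin_pi_div_two, mul_one] at h
  rw [node, neg_neg, ← sub_eq_add_neg, h, mul_comm]

lemma node_strictMono (k : ℕ) : StrictMono (fun j : Fin (k + 1) => node k j) := by
  intro i j hij
  have hk : (0 : ℝ) < 2 * k + 1 := by positivity
  have hij' : (i : ℝ) < j := by exact_mod_cast hij
  have hjk : (j : ℝ) ≤ k := by exact_mod_cast Nat.lt_succ_iff.1 j.2
  refine neg_lt_neg (cos_lt_cos_of_nonneg_of_le_pi (by positivity) ?_ ?_)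
  · rw [div_le_iff₀ hk]; nlinarith [pi_pos]
  · gcongr

lemma node_self (k : ℕ) : node k k = 1 := by
  rw [node, mul_div_cancel_left₀ _ (by positivity), cos_pi, neg_neg]

end chebyshevW

namespace Polynomial

lemma degree_lt_of_degree_X_sub_C_mul_lt {R : Type*} [CommRing R] [IsDomain R] {a : R}
    {u : R[X]} {n : ℕ} (h : ((X - C a) * u).degree < ((n + 1 : ℕ) : WithBot ℕ)) :
    u.degree < n := by
  rw [degree_mul, degree_X_sub_C, Nat.cast_succ, add_comm] at h
  exact (WithBot.add_lt_add_iff_right WithBot.one_ne_bot).1 h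

variable {n : ℕ} {s : ℝ[X]} {x : Fin (n + 1) → ℝ}

lemma le_natDegree_of_strictly_alternating (hx : StrictMono x)
    (hsign : ∀ j : Fin (n + 1), 0 < (-1) ^ (j : ℕ) * s.eval (x j)) : n ≤ s.natDegree := by
  have hroot : ∀ i : Fin n, ∃ r ∈ Ioo (x i.castSucc) (x i.succ), s.eval r = 0 := by
    intro i
    have hcont : ContinuousOn (fun t => (-1) ^ (i : ℕ) * s.eval t)
        (Icc (x i.castSucc) (x i.succ)) := by fun_prop
    have hleft := hsign i.castSucc
    have hright := hsign i.succ
    rw [Fin.val_succ, pow_succ, mul_neg_one, neg_mul] at hright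
    obtain ⟨r, hr, hr0⟩ := intermediate_value_Ioo'
      (hx Fin.castSucc_lt_succ).le hcont ⟨neg_pos.1 hright, hleft⟩
    exact ⟨r, hr, (mul_eq_zero.1 hr0).resolve_left (pow_ne_zero _ (by norm_num))⟩
  choose r hr hr0 using hroot
  have hr_mono : StrictMono r := fun i j hij =>
    calc r i < x i.succ := (hr i).2
      _ ≤ x j.castSucc := hx.monotone (Fin.succ_le_castSucc_iff.2 hij)
      _ < r j := (hr j).1
  by_contra! hdeg
  have hs : s = 0 :=
    eq_zero_of_natDegree_lt_card_of_eval_eq_zero s hr_mono.injective hr0 (by simpa using hdeg)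
  simpa [hs] using hsign 0

lemma alternating_neg_of_eq_X_sub_C_mul (hx : StrictMono x)
    (hsign : ∀ j : Fin (n + 1), 0 ≤ (-1) ^ (j : ℕ) * s.eval (x j)) {j₀ : Fin (n + 1)} {u : ℝ[X]}
    (hsu : s = (X - C (x j₀)) * u) (i : Fin n) :
    0 ≤ (-1) ^ (i : ℕ) * (-u).eval (x (j₀.succAbove i)) := by
  rcases lt_or_ge i.castSucc j₀ with hi | hi
  · have h := hsign i.castSucc
    have hneg : x i.castSucc - x j₀ < 0 := sub_neg.2 (hx hi)
    rw [hsu, eval_mul, eval_sub, eval_X, eval_C, Fin.val_castSucc] at h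
    rw [Fin.succAbove_of_castSucc_lt _ _ hi, eval_neg]
    nlinarith
  · have h := hsign i.succ
    have hpos : 0 < x i.succ - x j₀ := sub_pos.2 (hx (hi.trans_lt Fin.castSucc_lt_succ))
    rw [hsu, eval_mul, eval_sub, eval_X, eval_C, Fin.val_succ, pow_succ] at h
    rw [Fin.succAbove_of_le_castSucc _ _ hi, eval_neg]
    nlinarith

theorem eq_zero_of_degree_lt_of_alternating (hx : StrictMono x) (hdeg : s.degree < n)
    (hsign : ∀ j : Fin (n + 1), 0 ≤ (-1) ^ (j : ℕ) * s.eval (x j)) : s = 0 := by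
  induction n generalizing s with
  | zero => simpa using hdeg
  | succ n ih =>
    by_cases hzero : ∃ j, s.eval (x j) = 0
    · obtain ⟨j₀, hj₀⟩ := hzero
      set u := s /ₘ (X - C (x j₀))
      have hsu : s = (X - C (x j₀)) * u := (mul_divByMonic_eq_iff_isRoot.2 hj₀).symm
      have hu : -u = 0 := by
        refine ih (hx.comp (Fin.strictMono_succAbove j₀)) ?_
          (alternating_neg_of_eq_X_sub_C_mul hx hsign hsu)
        rw [degree_neg]
        exact degree_lt_of_degree_X_sub_C_mul_lt (hsu ▸ hdeg)
      rw [hsu, neg_eq_zero.1 hu, mul_zero]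
    · push Not at hzero
      have hstrict : ∀ j : Fin (n + 2), 0 < (-1) ^ (j : ℕ) * s.eval (x j) := fun j =>
        (hsign j).lt_of_ne (mul_ne_zero (pow_ne_zero _ (by norm_num)) (hzero j)).symm
      have hs : s ≠ 0 := fun hs => hzero 0 (by simp [hs])
      have hle := le_natDegree_of_strictly_alternating hx hstrict
      have hlt := (natDegree_lt_iff_degree_lt hs).2 hdeg
      omega

theorem eq_of_equioscillation {k : ℕ} {x w : Fin (k + 1) → ℝ} {a E : ℝ} {P q : ℝ[X]}
    (hx : StrictMono x) (ha : ∀ j, a < x j) (hw : ∀ j, 0 < w j)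
    (hP : P.degree ≤ k) (hq : q.degree ≤ k) (hPq : q.eval a = P.eval a)
    (hP_osc : ∀ j, w j * P.eval (x j) = (-1) ^ (j : ℕ) * E)
    (hq_le : ∀ j, w j * |q.eval (x j)| ≤ E) : q = P := by
  set u := (P - q) /ₘ (X - C a)
  have hru : P - q = (X - C a) * u :=
    (mul_divByMonic_eq_iff_isRoot.2 (by simp [hPq])).symm
  have hdeg : u.degree < k := by
    refine degree_lt_of_degree_X_sub_C_mul_lt (a := a) ?_
    rw [← hru]
    exact (degree_sub_le _ _).trans_lt (max_lt (hP.trans_lt (by exact_mod_cast k.lt_succ_self))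
      (hq.trans_lt (by exact_mod_cast k.lt_succ_self)))
  have hsign : ∀ j : Fin (k + 1), 0 ≤ (-1) ^ (j : ℕ) * u.eval (x j) := by
    intro j
    have hsq : ((-1 : ℝ) ^ (j : ℕ)) ^ 2 = 1 := by
      rw [← pow_mul]; exact Even.neg_one_pow ⟨j, by ring⟩
    have hPj : (-1) ^ (j : ℕ) * (w j * P.eval (x j)) = E := by
      rw [hP_osc, ← mul_assoc, ← sq, hsq, one_mul]
    have hqj : (-1) ^ (j : ℕ) * (w j * q.eval (x j)) ≤ E :=
      calc (-1) ^ (j : ℕ) * (w j * q.eval (x j)) ≤ |(-1) ^ (j : ℕ) * (w j * q.eval (x j))| :=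
            le_abs_self _
        _ = w j * |q.eval (x j)| := by
          rw [abs_mul, abs_neg_one_pow, one_mul, abs_mul, abs_of_pos (hw j)]
        _ ≤ E := hq_le j
    have hr : (w j * (x j - a)) * ((-1) ^ (j : ℕ) * u.eval (x j))
        = (-1) ^ (j : ℕ) * (w j * P.eval (x j)) - (-1) ^ (j : ℕ) * (w j * q.eval (x j)) := by
      have := congrArg (eval (x j)) hru
      simp only [eval_sub, eval_mul, eval_X, eval_C] at this
      linear_combination (-(-1) ^ (j : ℕ) * w j) * this
    refine nonneg_of_mul_nonneg_right ?_ (mul_pos (hw j) (sub_pos.2 (ha j)))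
    rw [hr]
    linarith
  have hu := eq_zero_of_degree_lt_of_alternating hx hdeg hsign
  rw [hu, mul_zero, sub_eq_zero] at hru
  exact hru.symm

end Polynomial

open chebyshevW

noncomputable def chebyshevWHat (k : ℕ) : ℝ[X] :=
  C ((2 * (k : ℝ) + 1)⁻¹) * (chebyshevW k).comp (-X)

lemma eval_chebyshevWHat (k : ℕ) (t : ℝ) :
    (chebyshevWHat k).eval t = (chebyshevW k).eval (-t) / (2 * k + 1) := by
  simp [chebyshevWHat, eval_comp, div_eq_inv_mul]

lemma degree_chebyshevWHat_le (k : ℕ) : (chebyshevWHat k).degree ≤ k := by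
  refine natDegree_le_iff_degree_le.1 ((natDegree_C_mul_le _ _).trans ?_)
  simpa using natDegree_comp_le.trans (by simpa using natDegree_le k)

lemma chebyshevWHat_eval_neg_one (k : ℕ) : (chebyshevWHat k).eval (-1) = 1 := by
  rw [eval_chebyshevWHat, neg_neg, chebyshevW.eval_one, div_self (by positivity)]

lemma sqrt_one_add_node_mul_eval_chebyshevWHat {k j : ℕ} (hj : j ≤ k) :
    √(1 + node k j) * (chebyshevWHat k).eval (node k j) = (-1) ^ j * (√2 / (2 * k + 1)) := by
  rw [eval_chebyshevWHat, mul_div_assoc', sqrt_one_add_node_mul_eval_neg_node hj, mul_div_assoc]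

noncomputable def weightedSup (δ : ℝ) (q : ℝ[X]) : ℝ :=
  sSup ((fun t => √(1 + t) * |q.eval t|) '' Icc δ 1)

lemma le_weightedSup {δ t : ℝ} (q : ℝ[X]) (ht : t ∈ Icc δ 1) :
    √(1 + t) * |q.eval t| ≤ weightedSup δ q :=
  le_csSup (isCompact_Icc.bddAbove_image (by fun_prop)) (mem_image_of_mem _ ht)

lemma weightedSup_le {δ c : ℝ} {q : ℝ[X]} (hδ : δ ≤ 1)
    (h : ∀ t ∈ Icc δ 1, √(1 + t) * |q.eval t| ≤ c) : weightedSup δ q ≤ c :=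
  csSup_le ((nonempty_Icc.2 hδ).image _) (forall_mem_image.2 h)

lemma weightedSup_chebyshevWHat (k : ℕ) {δ : ℝ} (hδ₁ : -1 ≤ δ) (hδ₂ : δ ≤ 1) :
    weightedSup δ (chebyshevWHat k) = √2 / (2 * k + 1) := by
  have hk : (0 : ℝ) < 2 * k + 1 := by positivity
  refine le_antisymm (weightedSup_le hδ₂ fun t ht => ?_) ?_
  · rw [eval_chebyshevWHat, abs_div, abs_of_pos hk, mul_div_assoc']
    exact div_le_div_of_nonneg_right (sqrt_one_add_mul_abs_eval_neg_le k (hδ₁.trans ht.1) ht.2)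
      hk.le
  · have h := le_weightedSup (δ := δ) (chebyshevWHat k) (t := node k k)
      (by simp [node_self, hδ₂])
    rwa [← abs_of_nonneg (sqrt_nonneg _), ← abs_mul,
      sqrt_one_add_node_mul_eval_chebyshevWHat le_rfl, abs_mul, abs_neg_one_pow, one_mul,
      abs_of_nonneg (by positivity)] at h

theorem chebyshevW_weighted_minimax_general (k : ℕ) (δ : ℝ)
    (hδ1 : -1 ≤ δ) (hδ2 : δ < -Real.cos (π / (2 * k + 1))) :
    let phat : Polynomial ℝ :=
      Polynomial.C ((2 * (k : ℝ) + 1)⁻¹) * (chebyshevW k).comp (-Polynomial.X)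
    let M : Polynomial ℝ → ℝ :=
      fun q => sSup ((fun t => Real.sqrt (1 + t) * |q.eval t|) '' Icc δ 1)
    phat.degree ≤ k ∧ phat.eval (-1) = 1 ∧
      ∀ p : Polynomial ℝ, p.degree ≤ k → p.eval (-1) = 1 →
        M phat ≤ M p ∧ (M p = M phat → p = phat) := by
  intro phat M
  have hnode : ∀ j : Fin (k + 1), node k j ∈ Ioc δ 1 := fun j =>
    ⟨hδ2.trans_le (by simpa [node] using (node_strictMono k).monotone (Fin.zero_le j)),
      ((node_strictMono k).monotone (Fin.le_last j)).trans_eq (node_self k)⟩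
  have hM : M phat = √2 / (2 * k + 1) :=
    weightedSup_chebyshevWHat k hδ1 ((hnode 0).1.le.trans (hnode 0).2)
  have huniq : ∀ p : ℝ[X], p.degree ≤ k → p.eval (-1) = 1 → M p ≤ √2 / (2 * k + 1) →
      p = phat :=
    fun p hp hp₁ hMp => eq_of_equioscillation (node_strictMono k)
      (fun j => hδ1.trans_lt (hnode j).1) (fun j => sqrt_pos.2 (by linarith [(hnode j).1]))
      (degree_chebyshevWHat_le k) hp (hp₁.trans (chebyshevWHat_eval_neg_one k).symm)
      (fun j => sqrt_one_add_node_mul_eval_chebyshevWHat j.is_le)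
      (fun j => (le_weightedSup p (Ioc_subset_Icc_self (hnode j))).trans hMp)
  refine ⟨degree_chebyshevWHat_le k, chebyshevWHat_eval_neg_one k, fun p hp hp₁ =>
    ⟨?_, fun h => huniq p hp hp₁ (h.trans hM).le⟩⟩
  by_contra! hlt
  exact hlt.ne (by rw [huniq p hp hp₁ (hlt.trans_eq hM).le])

/-- For `k ≥ 1` and any `δ ∈ [−1, −cos(π/(2k+1)))`, the minimax problem
`min_{p ∈ 𝒫ₖ, p(−1)=1} max_{t ∈ [δ,1]} (1+t)^{1/2} |p(t)|` has the unique minimizer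
`p̂ₖ(t) = W_k(−t)/(2k+1)`, where `W_k` is the Chebyshev polynomial of the fourth kind;
in particular this holds in the limit case `δ = −1`. -/
theorem chebyshevW_weighted_minimax (k : ℕ) (hk : 1 ≤ k) (δ : ℝ)
    (hδ1 : -1 ≤ δ) (hδ2 : δ < -Real.cos (π / (2 * k + 1))) :
    let phat : Polynomial ℝ :=
      Polynomial.C ((2 * (k : ℝ) + 1)⁻¹) * (chebyshevW k).comp (-Polynomial.X)
    let M : Polynomial ℝ → ℝ :=
      fun q => sSup ((fun t => Real.sqrt (1 + t) * |q.eval t|) '' Icc δ 1)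
    phat.degree ≤ k ∧ phat.eval (-1) = 1 ∧
      ∀ p : Polynomial ℝ, p.degree ≤ k → p.eval (-1) = 1 →
        M phat ≤ M p ∧ (M p = M phat → p = phat) :=
  chebyshevW_weighted_minimax_general k δ hδ1 hδ2
end
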